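/- arXiv:1701.08817 — 2 statements merged into one kernel-verified Lean document; each statement's English description precedes it below -/
import Mathlib

section
/- Let g, h₀ > 0, ω ≠ 0, and let f : ℝ → (0,∞) be continuously differentiable with f − h₀ compactly supported and f′(s₀) < 0 for some s₀. For any constant c₀ ∈ ℝ define X(t,s) = s + t·(c₀ + 2√(g f(s) + ω²f(s)²/4) + (g/ω)·log(2g + ω²f(s) + 2ω√(g f(s) + ω²f(s)²/4))). Then for every t > t₀ := 2√(g f(s₀) + ω²f(s₀)²/4)/(−f′(s₀)·(3g + ω²f(s₀))), the map s ↦ X(t,s) is not injective; that is, the characteristics of the simple wave cross and the wave breaks in finite time. In particular, every simple wave of the vorticity-modified shallow water equations carrying an increase of elevation (f′ < 0 somewhere for a right-moving wave) breaks, for any constant vorticity ω. -/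
/-!
Along the characteristic from `s` the depth is `f s`, so `X t s = s + t * (c₀ + c (f s))` with the
characteristic speed `c` below. For `h > 0`, `c' h = (3g + ω²h) / (2√(gh + ω²h²/4)) > 0`, hence
`∂ₛX(t, s₀) = 1 + t c'(f s₀) f'(s₀)`, which is negative exactly when `t > t₀`. On the other hand
`f = h₀` far to the right, where `s ↦ X t s` is a translation and so increasing. A continuous
injective map of `ℝ` is strictly monotone, and neither direction is compatible with both facts.
-/

open Real Filter Function

noncomputable def charSpeed (g ω h : ℝ) : ℝ :=
  2 * √(g * h + ω ^ 2 * h ^ 2 / 4)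
    + g / ω * log (2 * g + ω ^ 2 * h + 2 * ω * √(g * h + ω ^ 2 * h ^ 2 / 4))

section charSpeed

variable {g ω h : ℝ}

lemma charSpeed_log_arg_pos (hg : 0 < g) (hh : 0 < h) :
    0 < 2 * g + ω ^ 2 * h + 2 * ω * √(g * h + ω ^ 2 * h ^ 2 / 4) := by
  have hr := sq_sqrt (show 0 ≤ g * h + ω ^ 2 * h ^ 2 / 4 by positivity)
  set r := √(g * h + ω ^ 2 * h ^ 2 / 4)
  -- both conjugate factors are positive: their product is `4g²` and their sum `2(2g + ω²h)` is
  have hprod : (2 * g + ω ^ 2 * h - 2 * ω * r) * (2 * g + ω ^ 2 * h + 2 * ω * r) = 4 * g ^ 2 := by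
    linear_combination (-4 * ω ^ 2) * hr
  nlinarith [sq_nonneg ω, mul_pos hg hg, mul_nonneg (sq_nonneg ω) hh.le]

lemma hasDerivAt_charSpeed (hg : 0 < g) (hω : ω ≠ 0) (hh : 0 < h) :
    HasDerivAt (charSpeed g ω)
      ((3 * g + ω ^ 2 * h) / (2 * √(g * h + ω ^ 2 * h ^ 2 / 4))) h := by
  have hQ : HasDerivAt (fun h => g * h + ω ^ 2 * h ^ 2 / 4) (g + ω ^ 2 * h / 2) h :=
    ((hasDerivAt_id' h).const_mul g).add
      (((hasDerivAt_pow 2 h).const_mul (ω ^ 2)).div_const 4) |>.congr_deriv (by ring)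
  have hr : √(g * h + ω ^ 2 * h ^ 2 / 4) ≠ 0 := (sqrt_pos.2 (by positivity)).ne'
  have hL := (charSpeed_log_arg_pos (ω := ω) hg hh).ne'
  have hsqrt := hQ.sqrt (by positivity)
  have hlog := ((((hasDerivAt_id' h).const_mul (ω ^ 2)).const_add (2 * g)).add
    (hsqrt.const_mul (2 * ω))).log hL
  -- with `Q = gh + ω²h²/4` the log argument is `2 (Q' + ω √Q)`, so the log term contributes
  -- `g / (2 √Q)`
  refine ((hsqrt.const_mul 2).add (hlog.const_mul (g / ω))).congr_deriv ?_
  simp only [Pi.add_apply]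
  generalize √(g * h + ω ^ 2 * h ^ 2 / 4) = r at hr hL ⊢
  field_simp
  ring

end charSpeed

theorem HasCompactSupport.eventually_atTop_eq {E : Type*} [AddGroup E] [TopologicalSpace E]
    {f : ℝ → E} {c : E} (hf : HasCompactSupport fun s => f s - c) :
    ∀ᶠ s in atTop, f s = c := by
  rw [hasCompactSupport_iff_eventuallyEq, coclosedCompact_eq_cocompact] at hf
  exact (hf.filter_mono atTop_le_cocompact).mono fun s hs => sub_eq_zero.1 hs

theorem not_injective_of_hasDerivAt_neg {φ : ℝ → ℝ} (hφ : Continuous φ) {x d : ℝ}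
    (hd : HasDerivAt φ d x) (hneg : d < 0) {a b : ℝ} (hab : a < b) (hlt : φ a < φ b) :
    ¬ Injective φ := by
  intro hinj
  rcases hφ.strictMono_of_inj hinj with hmono | hanti
  · exact hneg.not_ge (hd.deriv ▸ hmono.monotone.deriv_nonneg)
  · exact (hanti hab).not_gt hlt

theorem simple_wave_breaks_general
    (g h₀ ω c₀ : ℝ) (hg : 0 < g) (hω : ω ≠ 0)
    (f : ℝ → ℝ) (hf : ContDiff ℝ 1 f) (hfpos : ∀ s : ℝ, 0 < f s)
    (hsupp : HasCompactSupport fun s => f s - h₀)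
    (s₀ : ℝ) (hs₀ : deriv f s₀ < 0)
    (X : ℝ → ℝ → ℝ)
    (hX : ∀ t s : ℝ, X t s
      = s + t * (c₀ + 2 * Real.sqrt (g * f s + ω ^ 2 * f s ^ 2 / 4)
        + g / ω * Real.log (2 * g + ω ^ 2 * f s
          + 2 * ω * Real.sqrt (g * f s + ω ^ 2 * f s ^ 2 / 4))))
    (t₀ : ℝ)
    (ht₀ : t₀ = 2 * Real.sqrt (g * f s₀ + ω ^ 2 * f s₀ ^ 2 / 4)
      / (-(deriv f s₀) * (3 * g + ω ^ 2 * f s₀))) :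
    ∀ t > t₀, ¬ Function.Injective fun s => X t s := by
  intro t ht
  have hspeed (s : ℝ) := hasDerivAt_charSpeed hg hω (hfpos s)
  have hA : 0 < 3 * g + ω ^ 2 * f s₀ := by have := hfpos s₀; positivity
  have hr : 0 < √(g * f s₀ + ω ^ 2 * f s₀ ^ 2 / 4) :=
    sqrt_pos.2 (by have := hfpos s₀; positivity)
  set k := (3 * g + ω ^ 2 * f s₀) / (2 * √(g * f s₀ + ω ^ 2 * f s₀ ^ 2 / 4)) * deriv f s₀
    with hk_def
  have hk : k < 0 := mul_neg_of_pos_of_neg (by positivity) hs₀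
  have hbreak : 1 + t * k < 0 := by
    have : t₀ * k = -1 := by
      rw [ht₀, hk_def]
      generalize √(g * f s₀ + ω ^ 2 * f s₀ ^ 2 / 4) = r at hr ⊢
      field_simp [hs₀.ne, hA.ne', hr.ne']
    nlinarith [mul_lt_mul_of_neg_right ht hk]
  obtain ⟨a, ha⟩ := hsupp.eventually_atTop_eq.exists_forall_of_atTop
  have hXt : (fun s => X t s) = fun s => s + t * (c₀ + charSpeed g ω (f s)) :=
    funext fun s => by rw [hX, charSpeed, add_assoc]
  rw [hXt]
  refine not_injective_of_hasDerivAt_neg (x := s₀) ?_ ?_ hbreak (lt_add_one a) ?_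
  · exact continuous_id.add <| continuous_const.mul <| continuous_const.add <|
      continuous_iff_continuousAt.2 fun s => (hspeed s).continuousAt.comp hf.continuous.continuousAt
  · have hfs₀ := (hf.differentiable one_ne_zero s₀).hasDerivAt
    exact (hasDerivAt_id' s₀).add (((hspeed s₀).comp s₀ hfs₀).const_add c₀ |>.const_mul t)
  · rw [ha a le_rfl, ha (a + 1) (by linarith)]
    linarith

/-- Every simple wave of the vorticity-modified shallow water equations carrying an
increase of elevation breaks, for any constant vorticity: for `t` beyond the breaking
time `t₀` the characteristic map `s ↦ X(t,s)` is not injective, i.e., characteristics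
cross. -/
theorem simple_wave_breaks
    (g h₀ ω c₀ : ℝ) (hg : 0 < g) (hh₀ : 0 < h₀) (hω : ω ≠ 0)
    (f : ℝ → ℝ) (hf : ContDiff ℝ 1 f) (hfpos : ∀ s : ℝ, 0 < f s)
    (hsupp : HasCompactSupport fun s => f s - h₀)
    (s₀ : ℝ) (hs₀ : deriv f s₀ < 0)
    (X : ℝ → ℝ → ℝ)
    (hX : ∀ t s : ℝ, X t s
      = s + t * (c₀ + 2 * Real.sqrt (g * f s + ω ^ 2 * f s ^ 2 / 4)
        + g / ω * Real.log (2 * g + ω ^ 2 * f s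
          + 2 * ω * Real.sqrt (g * f s + ω ^ 2 * f s ^ 2 / 4))))
    (t₀ : ℝ)
    (ht₀ : t₀ = 2 * Real.sqrt (g * f s₀ + ω ^ 2 * f s₀ ^ 2 / 4)
      / (-(deriv f s₀) * (3 * g + ω ^ 2 * f s₀))) :
    ∀ t > t₀, ¬ Function.Injective fun s => X t s :=
  simple_wave_breaks_general g h₀ ω c₀ hg hω f hf hfpos hsupp s₀ hs₀ X hX t₀ ht₀
end

section
/- Fix ω ∈ ℝ and (normalizing g = h₀ = 1) let c(k) = (ω/2)·tanh(k)/k + √(tanh(k)/k + (ω²/4)·(tanh(k)/k)²) for k > 0, and let c₀ = ω/2 + √(1 + ω²/4) be its limit as k → 0⁺. Then for every k > 0: (d²/dk²)(k·c(k)) ≠ 0 and ((d/dk)(k·c(k)))² ≠ c₀². That is, the resonance indices i₁(k) = (k c(k))″ and i₂(k) = ((k c(k))′)² − c₀² of the full-dispersion shallow water equations never vanish: the group velocity has no extremum, and the resonance of short and long waves does not occur, for any constant vorticity ω. -/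
/-!
Write `a = ω / 2` and `t = tanh k`, so that `k c(k) = a t + √(k t + a² t²) =: F(k)` for
`k > 0`. The sign of `F''` is that of `2 G G'' - G'² - 8 a t t' G √G` with `G = k t + a² t²`.
Bounding `√G` below by `a t` when `a ≥ 0`, and above by `|a| t + k / (2 |a|)` when `a < 0`, turns
this into a negative combination of squares and positive monomials, so `F'' < 0`. Hence the group
velocity `F'` decreases strictly on `(0, ∞)` from its limit `c₀` at `0⁺`, and it stays positive,
so `0 < F'(k) < c₀`.
-/

open Real Filter Topology Set

theorem StrictAntiOn.lt_of_tendsto_nhdsGT {α β : Type*} [LinearOrder α] [TopologicalSpace α]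
    [OrderTopology α] [DenselyOrdered α] [Preorder β] [TopologicalSpace β]
    [ClosedIciTopology β] {f : α → β} {a x : α} {L : β} (hf : StrictAntiOn f (Ioi a))
    (hL : Tendsto f (𝓝[>] a) (𝓝 L)) (hx : a < x) : f x < L := by
  have : (𝓝[>] a).NeBot := nhdsGT_neBot_of_exists_gt ⟨x, hx⟩
  obtain ⟨y, hay, hyx⟩ := exists_between hx
  have hfy : f y ≤ L := by
    refine ge_of_tendsto hL ?_
    filter_upwards [Ioo_mem_nhdsGT hay] with z hz
    exact (hf hz.1 hay hz.2).le
  exact (hf hay hx hyx).trans_le hfy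

namespace Real

theorem tanh_pos {x : ℝ} (hx : 0 < x) : 0 < tanh x := by
  rw [tanh_eq_sinh_div_cosh]
  exact div_pos (sinh_pos_iff.2 hx) (cosh_pos x)

theorem hasDerivAt_tanh (x : ℝ) : HasDerivAt tanh (1 - tanh x ^ 2) x := by
  have h := (hasDerivAt_sinh x).div (hasDerivAt_cosh x) (cosh_pos x).ne'
  have hd : (cosh x * cosh x - sinh x * sinh x) / cosh x ^ 2 = 1 - tanh x ^ 2 := by
    have := cosh_sq_sub_sinh_sq x
    rw [tanh_eq_sinh_div_cosh]
    field_simp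
  rw [hd] at h
  exact h.congr_of_eventuallyEq (.of_forall fun y => tanh_eq_sinh_div_cosh y)

theorem tendsto_tanh_div_self : Tendsto (fun x => tanh x / x) (𝓝[≠] 0) (𝓝 1) := by
  have h := (hasDerivAt_tanh 0).tendsto_slope_zero
  simp only [tanh_zero, zero_add, sub_zero, smul_eq_mul] at h
  simpa [div_eq_inv_mul] using h

end Real

namespace ShearFlowWave

section Algebra

-- `t`, `s` stand for `tanh k` and `tanh' k = 1 - tanh k ^ 2`; the polynomials are the radicand
-- `k t + a² t²` of `F` and its first two derivatives.

variable {a k t s : ℝ}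

theorem groupVelocity_numerator_pos (hk : 0 < k) (ht : 0 < t) (hs : 0 < s) :
    0 < 2 * a * s * √(k * t + a ^ 2 * t ^ 2) + (t + k * s + 2 * a ^ 2 * t * s) := by
  set h := √(k * t + a ^ 2 * t ^ 2)
  rcases le_or_gt 0 a with ha | ha
  · positivity
  · have ha0 : a ≠ 0 := ha.ne
    have hsq : h ^ 2 = k * t + a ^ 2 * t ^ 2 := sq_sqrt (by positivity)
    have hD : 0 < t + k * s + 2 * a ^ 2 * t * s := by positivity
    have hsq_lt : (2 * a * s * h) ^ 2 < (t + k * s + 2 * a ^ 2 * t * s) ^ 2 := by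
      have : 0 < (t + k * s) ^ 2 + 4 * a ^ 2 * t ^ 2 * s := by positivity
      rw [mul_pow, hsq]
      nlinarith
    linarith [(abs_lt_of_sq_lt_sq' hsq_lt hD.le).1]

theorem groupVelocity_deriv_numerator_neg (hk : 0 < k) (ht : 0 < t) (hs : 0 < s) :
    2 * (k * t + a ^ 2 * t ^ 2) * (2 * s - 2 * k * t * s + 2 * a ^ 2 * s ^ 2
      - 4 * a ^ 2 * t ^ 2 * s) - (t + k * s + 2 * a ^ 2 * t * s) ^ 2
      < 8 * a * t * s * (k * t + a ^ 2 * t ^ 2) * √(k * t + a ^ 2 * t ^ 2) := by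
  set g := k * t + a ^ 2 * t ^ 2
  have hg : 0 < g := by positivity
  rcases le_or_gt 0 a with ha | ha
  · have hat : a * t ≤ √g := le_sqrt_of_sq_le (by simp only [g]; nlinarith [mul_pos hk ht])
    have key : 2 * g * (2 * s - 2 * k * t * s + 2 * a ^ 2 * s ^ 2 - 4 * a ^ 2 * t ^ 2 * s)
        - (t + k * s + 2 * a ^ 2 * t * s) ^ 2 - 8 * a * t * s * g * (a * t)
        = -(t - k * s) ^ 2 - 4 * k ^ 2 * t ^ 2 * s - 20 * a ^ 2 * k * t ^ 3 * s
          - 16 * a ^ 4 * t ^ 4 * s := by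
      simp only [g]; ring
    have hrest : 0 < 4 * k ^ 2 * t ^ 2 * s + 20 * a ^ 2 * k * t ^ 3 * s
        + 16 * a ^ 4 * t ^ 4 * s := by positivity
    nlinarith [sq_nonneg (t - k * s),
      mul_le_mul_of_nonneg_left hat (by positivity : 0 ≤ 8 * a * t * s * g)]
  · -- `R = |a| t + k / (2 |a|)` exceeds `√g` since `R ^ 2 = g + (k / (2 a)) ^ 2`, and it is
    -- chosen to make the numerator exactly `-(t - k s) ^ 2`.
    have ha0 : a ≠ 0 := ha.ne
    set R := -(a * t) - k / (2 * a)
    have hR : 0 < R := by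
      have : 0 < -(k / (2 * a)) := neg_pos.2 (div_neg_of_pos_of_neg hk (by linarith))
      simp only [R]; nlinarith
    have hgR : √g < R := by
      rw [sqrt_lt' hR]
      have : 0 < (k / (2 * a)) ^ 2 := by positivity
      have e : R ^ 2 = g + (k / (2 * a)) ^ 2 := by simp only [R, g]; field_simp; ring
      linarith
    have key : 2 * g * (2 * s - 2 * k * t * s + 2 * a ^ 2 * s ^ 2 - 4 * a ^ 2 * t ^ 2 * s)
        - (t + k * s + 2 * a ^ 2 * t * s) ^ 2 - 8 * a * t * s * g * R = -(t - k * s) ^ 2 := by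
      simp only [R, g]; field_simp; ring
    have hlt : 8 * a * t * s * g * R < 8 * a * t * s * g * √g :=
      mul_lt_mul_of_neg_left hgR (by nlinarith [mul_pos (mul_pos ht hs) hg])
    nlinarith [sq_nonneg (t - k * s)]

end Algebra

-- `a` is `ω / 2`.
variable (a : ℝ) {k : ℝ}

noncomputable def phaseSpeed (k : ℝ) : ℝ :=
  a * (tanh k / k) + √(tanh k / k + a ^ 2 * (tanh k / k) ^ 2)

noncomputable def longWaveSpeed : ℝ := a + √(1 + a ^ 2)

noncomputable def radicand (k : ℝ) : ℝ := k * tanh k + a ^ 2 * tanh k ^ 2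

noncomputable def radicandDeriv (k : ℝ) : ℝ :=
  tanh k + k * (1 - tanh k ^ 2) + 2 * a ^ 2 * tanh k * (1 - tanh k ^ 2)

noncomputable def radicandDeriv2 (k : ℝ) : ℝ :=
  2 * (1 - tanh k ^ 2) - 2 * k * tanh k * (1 - tanh k ^ 2) + 2 * a ^ 2 * (1 - tanh k ^ 2) ^ 2
    - 4 * a ^ 2 * tanh k ^ 2 * (1 - tanh k ^ 2)

/-- `k ↦ k c(k)` for `k > 0`. -/
noncomputable def frequency (k : ℝ) : ℝ := a * tanh k + √(radicand a k)

noncomputable def groupVelocity (k : ℝ) : ℝ :=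
  a * (1 - tanh k ^ 2) + radicandDeriv a k / (2 * √(radicand a k))

noncomputable def groupVelocityDeriv (k : ℝ) : ℝ :=
  -2 * a * tanh k * (1 - tanh k ^ 2)
    + (2 * radicand a k * radicandDeriv2 a k - radicandDeriv a k ^ 2)
      / (4 * radicand a k * √(radicand a k))

theorem radicand_pos (hk : 0 < k) : 0 < radicand a k := by
  have := tanh_pos hk
  unfold radicand
  positivity

theorem hasDerivAt_radicand (k : ℝ) : HasDerivAt (radicand a) (radicandDeriv a k) k := by
  have h := ((hasDerivAt_id k).mul (hasDerivAt_tanh k)).add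
    (((hasDerivAt_tanh k).pow 2).const_mul (a ^ 2))
  refine h.congr_deriv ?_
  simp only [radicandDeriv, id]
  ring

theorem hasDerivAt_radicandDeriv (k : ℝ) :
    HasDerivAt (radicandDeriv a) (radicandDeriv2 a k) k := by
  have hs := ((hasDerivAt_tanh k).pow 2).const_sub 1
  have h := ((hasDerivAt_tanh k).add ((hasDerivAt_id k).mul hs)).add
    ((((hasDerivAt_tanh k).const_mul (2 * a ^ 2))).mul hs)
  refine h.congr_deriv ?_
  simp only [radicandDeriv2, id, Pi.pow_apply]
  ring

theorem hasDerivAt_sqrt_radicand (hk : 0 < k) :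
    HasDerivAt (fun x => √(radicand a x)) (radicandDeriv a k / (2 * √(radicand a k))) k :=
  (hasDerivAt_radicand a k).sqrt (radicand_pos a hk).ne'

theorem hasDerivAt_frequency (hk : 0 < k) : HasDerivAt (frequency a) (groupVelocity a k) k :=
  ((hasDerivAt_tanh k).const_mul a).add (hasDerivAt_sqrt_radicand a hk)

theorem hasDerivAt_groupVelocity (hk : 0 < k) :
    HasDerivAt (groupVelocity a) (groupVelocityDeriv a k) k := by
  have hG := radicand_pos a hk
  have hsqrt : 0 < √(radicand a k) := sqrt_pos.2 hG
  have h := (((hasDerivAt_tanh k).pow 2).const_sub 1).const_mul a |>.add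
    ((hasDerivAt_radicandDeriv a k).div ((hasDerivAt_sqrt_radicand a hk).const_mul 2)
      (by positivity))
  refine h.congr_deriv ?_
  have hsq : √(radicand a k) ^ 2 = radicand a k := sq_sqrt hG.le
  simp only [groupVelocityDeriv]
  generalize √(radicand a k) = r at hsq hsqrt ⊢
  rw [← hsq]
  field_simp
  ring

theorem groupVelocity_pos (hk : 0 < k) : 0 < groupVelocity a k := by
  have hsqrt : 0 < √(radicand a k) := sqrt_pos.2 (radicand_pos a hk)
  have hnum := groupVelocity_numerator_pos (a := a) hk (tanh_pos hk)
    (sub_pos.2 (tanh_sq_lt_one k))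
  have h : groupVelocity a k = (2 * a * (1 - tanh k ^ 2) * √(radicand a k) + radicandDeriv a k)
      / (2 * √(radicand a k)) := by
    rw [groupVelocity]; field_simp
  rw [h]
  exact div_pos hnum (by positivity)

theorem groupVelocityDeriv_neg (hk : 0 < k) : groupVelocityDeriv a k < 0 := by
  have hG := radicand_pos a hk
  have hsqrt : 0 < √(radicand a k) := sqrt_pos.2 hG
  have hnum := groupVelocity_deriv_numerator_neg (a := a) hk (tanh_pos hk)
    (sub_pos.2 (tanh_sq_lt_one k))
  have h : groupVelocityDeriv a k = (2 * radicand a k * radicandDeriv2 a k - radicandDeriv a k ^ 2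
      - 8 * a * tanh k * (1 - tanh k ^ 2) * radicand a k * √(radicand a k))
      / (4 * radicand a k * √(radicand a k)) := by
    rw [groupVelocityDeriv]; field_simp; ring
  rw [h]
  exact div_neg_of_neg_of_pos (sub_neg.2 hnum) (by positivity)

theorem strictAntiOn_groupVelocity : StrictAntiOn (groupVelocity a) (Ioi 0) := by
  refine strictAntiOn_of_deriv_neg (convex_Ioi 0)
    (fun x hx => (hasDerivAt_groupVelocity a hx).continuousAt.continuousWithinAt) ?_
  rw [interior_Ioi]
  intro x hx
  rw [(hasDerivAt_groupVelocity a hx).deriv]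
  exact groupVelocityDeriv_neg a hx

theorem sqrt_radicand_eq_mul_sqrt (hk : 0 < k) :
    √(radicand a k) = k * √(tanh k / k + a ^ 2 * (tanh k / k) ^ 2) := by
  rw [← sqrt_sq hk.le, ← sqrt_mul (sq_nonneg k), sqrt_sq hk.le, radicand]
  congr 1
  field_simp

theorem self_mul_phaseSpeed (hk : 0 < k) : k * phaseSpeed a k = frequency a k := by
  rw [phaseSpeed, frequency, sqrt_radicand_eq_mul_sqrt a hk]
  field_simp

theorem groupVelocity_eq_of_pos (hk : 0 < k) :
    groupVelocity a k = a * (1 - tanh k ^ 2) + (tanh k / k + (1 - tanh k ^ 2)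
      + 2 * a ^ 2 * (tanh k / k) * (1 - tanh k ^ 2))
      / (2 * √(tanh k / k + a ^ 2 * (tanh k / k) ^ 2)) := by
  have hsqrt : 0 < √(tanh k / k + a ^ 2 * (tanh k / k) ^ 2) := by
    have := tanh_pos hk
    positivity
  rw [groupVelocity, sqrt_radicand_eq_mul_sqrt a hk, radicandDeriv]
  field_simp

theorem tendsto_phaseSpeed : Tendsto (phaseSpeed a) (𝓝[>] 0) (𝓝 (longWaveSpeed a)) := by
  have hm := tendsto_tanh_div_self.mono_left (nhdsGT_le_nhdsNE 0)
  have h : Tendsto (phaseSpeed a) (𝓝[>] 0) (𝓝 (a * 1 + √(1 + a ^ 2 * 1 ^ 2))) :=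
    (hm.const_mul a).add ((hm.add ((hm.pow 2).const_mul (a ^ 2))).sqrt)
  simpa [longWaveSpeed] using h

theorem tendsto_groupVelocity : Tendsto (groupVelocity a) (𝓝[>] 0) (𝓝 (longWaveSpeed a)) := by
  have hm := tendsto_tanh_div_self.mono_left (nhdsGT_le_nhdsNE 0)
  have ht : Tendsto tanh (𝓝[>] 0) (𝓝 0) := by
    simpa using (hasDerivAt_tanh 0).continuousAt.tendsto.mono_left nhdsWithin_le_nhds
  have hs := (ht.pow 2).const_sub 1
  have h := (hs.const_mul a).add (((hm.add hs).add (((hm.const_mul (2 * a ^ 2)).mul hs))).div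
    ((hm.add ((hm.pow 2).const_mul (a ^ 2))).sqrt.const_mul 2) (by positivity))
  have hlim : a * (1 - 0 ^ 2) + (1 + (1 - 0 ^ 2) + 2 * a ^ 2 * 1 * (1 - 0 ^ 2))
      / (2 * √(1 + a ^ 2 * 1 ^ 2)) = longWaveSpeed a := by
    rw [longWaveSpeed, show (1 : ℝ) + (1 - 0 ^ 2) + 2 * a ^ 2 * 1 * (1 - 0 ^ 2)
      = 2 * (1 + a ^ 2 * 1 ^ 2) by ring, mul_div_mul_left _ _ two_ne_zero, div_sqrt]
    ring_nf
  rw [hlim] at h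
  refine h.congr' ?_
  filter_upwards [self_mem_nhdsWithin] with x hx
  exact (groupVelocity_eq_of_pos a hx).symm

theorem groupVelocity_lt_longWaveSpeed (hk : 0 < k) : groupVelocity a k < longWaveSpeed a :=
  (strictAntiOn_groupVelocity a).lt_of_tendsto_nhdsGT (tendsto_groupVelocity a) hk

theorem deriv_mul_phaseSpeed (hk : 0 < k) :
    deriv (fun x => x * phaseSpeed a x) k = groupVelocity a k := by
  have hEq : (fun x => x * phaseSpeed a x) =ᶠ[𝓝 k] frequency a :=
    eventually_of_mem (Ioi_mem_nhds hk) fun x hx => self_mul_phaseSpeed a hx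
  rw [hEq.deriv_eq, (hasDerivAt_frequency a hk).deriv]

theorem deriv_deriv_mul_phaseSpeed (hk : 0 < k) :
    deriv (deriv fun x => x * phaseSpeed a x) k = groupVelocityDeriv a k := by
  have hEq : deriv (fun x => x * phaseSpeed a x) =ᶠ[𝓝 k] groupVelocity a :=
    eventually_of_mem (Ioi_mem_nhds hk) fun x hx => deriv_mul_phaseSpeed a hx
  rw [hEq.deriv_eq, (hasDerivAt_groupVelocity a hk).deriv]

end ShearFlowWave

open ShearFlowWave

/-- With `g = h₀ = 1`, the resonance indices `i₁(k) = (k c(k))″` and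
`i₂(k) = ((k c(k))′)² - c₀²` of the full-dispersion shallow water equations never vanish
for `k > 0`: the group velocity has no extremum, and the resonance of short and long
waves does not occur, for any constant vorticity `ω`. Here `c₀ = ω/2 + √(1 + ω²/4)` is
the limit of the phase speed `c(k)` as `k → 0⁺`. -/
theorem resonances_R1_R2_never_occur
    (ω : ℝ)
    (c : ℝ → ℝ)
    (hc : ∀ k : ℝ, c k = ω / 2 * (Real.tanh k / k)
      + Real.sqrt (Real.tanh k / k + ω ^ 2 / 4 * (Real.tanh k / k) ^ 2))
    (c₀ : ℝ) (hc₀ : c₀ = ω / 2 + Real.sqrt (1 + ω ^ 2 / 4)) :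
    Tendsto c (𝓝[>] 0) (𝓝 c₀) ∧
    ∀ k > (0 : ℝ),
      deriv (deriv fun k' => k' * c k') k ≠ 0 ∧
      (deriv (fun k' => k' * c k') k) ^ 2 ≠ c₀ ^ 2 := by
  have hω : ω ^ 2 / 4 = (ω / 2) ^ 2 := by ring
  obtain rfl : c = phaseSpeed (ω / 2) := funext fun k => by rw [hc, phaseSpeed, hω]
  obtain rfl : c₀ = longWaveSpeed (ω / 2) := by rw [hc₀, longWaveSpeed, hω]
  refine ⟨tendsto_phaseSpeed _, fun k hk => ⟨?_, ?_⟩⟩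
  · rw [deriv_deriv_mul_phaseSpeed _ hk]
    exact (groupVelocityDeriv_neg _ hk).ne
  · rw [deriv_mul_phaseSpeed _ hk]
    exact (pow_lt_pow_left₀ (groupVelocity_lt_longWaveSpeed _ hk)
      (groupVelocity_pos _ hk).le two_ne_zero).ne
end
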